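/- Let Λ be a k-graph and α an action of ℤ^l on Λ by k-graph automorphisms, and let α̃ be the induced action of ℤ^l on the topological realization X_Λ by homeomorphisms (α̃_m([λ,t]) = [α_m(λ),t]). Then there is a homeomorphism φ from the mapping torus M(α̃) onto the topological realization X_{Λ ×_α ℤ^l} of the crossed-product (k+l)-graph, determined by φ([[λ,s],t]_{M(α̃)}) = [(λ,⌈t⌉),(s,t)] whenever t ≥ 0, where ℝ^{k+l} is identified with ℝ^k × ℝ^l. -/

import Mathlib

/-!
A point `[[λ, s], t]` of the mapping torus is sent to `[(α_{-z} λ, n), (s, t - z)]` for any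
integer vector `z ≤ t` and any `n ≥ t - z`. The segment of `(α_{-z} λ, n)` cut out by
`(s, t - z)` is `(α_{-⌊t⌋}(λ(⌊s⌋, ⌈s⌉)), ⌈t - ⌊t⌋⌉)` whatever `z` and `n` are, so this class does
not depend on the choices; in particular it is invariant under `α̃_m × (m + ·)`. The inverse sends
`[(λ, n), (s, t)]` to `[[λ, s], t]`. Continuity of the forward map is local in `t`: near a given
`t` one `z` serves for every point, and with `z` fixed the formula is plainly continuous.
-/

/-- A `k`-graph: a countable small category (objects identified with the
identity morphisms, i.e. the morphisms of degree `0`) equipped with a degree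
functor `d : Λ → ℕᵏ` satisfying the unique factorization property. -/
structure KGraph (k : ℕ) where
  /-- The morphisms of the category. -/
  Mor : Type
  /-- The category is countable. -/
  countable : Countable Mor
  /-- The source (domain) of a morphism, viewed as a degree-zero morphism. -/
  src : Mor → Mor
  /-- The range (codomain) of a morphism, viewed as a degree-zero morphism. -/
  rng : Mor → Mor
  /-- Composition `comp a b = a ∘ b`, meaningful when `src a = rng b`. -/
  comp : Mor → Mor → Mor
  /-- The degree functor. -/
  deg : Mor → Fin k → ℕ
  src_src : ∀ a, src (src a) = src a
  rng_src : ∀ a, rng (src a) = src a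
  src_rng : ∀ a, src (rng a) = rng a
  rng_rng : ∀ a, rng (rng a) = rng a
  deg_src : ∀ a, deg (src a) = 0
  deg_rng : ∀ a, deg (rng a) = 0
  src_comp : ∀ a b, src a = rng b → src (comp a b) = src b
  rng_comp : ∀ a b, src a = rng b → rng (comp a b) = rng a
  comp_assoc : ∀ a b c, src a = rng b → src b = rng c →
    comp (comp a b) c = comp a (comp b c)
  id_comp : ∀ a, comp (rng a) a = a
  comp_id : ∀ a, comp a (src a) = a
  deg_comp : ∀ a b, src a = rng b → deg (comp a b) = deg a + deg b
  /-- The unique factorization property. -/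
  factor : ∀ (a : Mor) (m n : Fin k → ℕ), deg a = m + n →
    ∃! p : Mor × Mor, deg p.1 = m ∧ deg p.2 = n ∧ src p.1 = rng p.2 ∧
      comp p.1 p.2 = a

namespace KGraph

variable {k : ℕ} (Λ : KGraph k)

/-- The segment `a(m,n)` of a morphism `a`, i.e. the (unique) middle factor of
`a = a(0,m) a(m,n) a(n, d(a))`; junk value `a` if no such factorization exists. -/
noncomputable def seg (a : Λ.Mor) (m n : Fin k → ℕ) : Λ.Mor :=
  letI := Classical.propDecidable
  if h : ∃ b : Λ.Mor, Λ.deg b = n - m ∧ ∃ x y : Λ.Mor,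
      Λ.deg x = m ∧ Λ.src x = Λ.rng b ∧ Λ.src b = Λ.rng y ∧
      a = Λ.comp x (Λ.comp b y)
  then h.choose else a

/-- The points `⨆_{λ ∈ Λ} {λ} × [0, d(λ)]` of which the topological
realization is a quotient; topologized as a disjoint union of subspaces of `ℝᵏ`. -/
def Points : Type :=
  Σ a : Λ.Mor, { t : Fin k → ℝ // ∀ i, 0 ≤ t i ∧ t i ≤ (Λ.deg a i : ℝ) }

instance : TopologicalSpace Λ.Points :=
  inferInstanceAs (TopologicalSpace
    (Σ a : Λ.Mor, { t : Fin k → ℝ // ∀ i, 0 ≤ t i ∧ t i ≤ (Λ.deg a i : ℝ) }))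

/-- Coordinatewise floor `⌊t⌋` (as a vector of naturals; this is the honest
floor on the relevant region `t ≥ 0`). -/
noncomputable def fl (t : Fin k → ℝ) : Fin k → ℕ := fun i => (⌊t i⌋).toNat

/-- Coordinatewise ceiling `⌈t⌉`. -/
noncomputable def ce (t : Fin k → ℝ) : Fin k → ℕ := fun i => (⌈t i⌉).toNat

/-- The fractional part `t - ⌊t⌋`. -/
noncomputable def frac (t : Fin k → ℝ) : Fin k → ℝ := fun i => t i - ((⌊t i⌋).toNat : ℝ)

/-- The relation `(μ,s) ∼ (ν,t) ⟺ μ(⌊s⌋,⌈s⌉) = ν(⌊t⌋,⌈t⌉)` and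
`s - ⌊s⌋ = t - ⌊t⌋` defining the topological realization. -/
def ptRel : Λ.Points → Λ.Points → Prop := fun p q =>
  Λ.seg p.1 (fl p.2.1) (ce p.2.1) = Λ.seg q.1 (fl q.2.1) (ce q.2.1) ∧
    frac p.2.1 = frac q.2.1

/-- `ptRel` is an equivalence relation. -/
def ptSetoid : Setoid Λ.Points where
  r := Λ.ptRel
  iseqv := ⟨fun _ => ⟨rfl, rfl⟩, fun h => ⟨h.1.symm, h.2.symm⟩,
    fun h h' => ⟨h.1.trans h'.1, h.2.trans h'.2⟩⟩

/-- The topological realization `X_Λ` of the `k`-graph `Λ`. -/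
def Real : Type := Quotient Λ.ptSetoid

instance : TopologicalSpace Λ.Real :=
  inferInstanceAs (TopologicalSpace (Quotient Λ.ptSetoid))

/-- The class `[λ, t] ∈ X_Λ` of a pair `(λ, t)` with `0 ≤ t ≤ d(λ)`. -/
def pt (a : Λ.Mor) (t : Fin k → ℝ) (h : ∀ i, 0 ≤ t i ∧ t i ≤ (Λ.deg a i : ℝ)) :
    Λ.Real :=
  Quotient.mk Λ.ptSetoid ⟨a, ⟨t, h⟩⟩

/-- The open cube `Q_λ = {[λ,t] : t ∈ (0, d(λ))}` of a morphism `λ` (of degree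
`≤ (1,…,1)`). -/
def Qcube (lam : Λ.Mor) : Set Λ.Real :=
  { x | ∃ (t : Fin k → ℝ) (h : ∀ i, 0 ≤ t i ∧ t i ≤ (Λ.deg lam i : ℝ)),
      (∀ i, Λ.deg lam i = 1 → 0 < t i ∧ t i < 1) ∧ x = Λ.pt lam t h }

/-- The `r`-skeleton `X_Λ^r` of the topological realization. -/
def skel' (G : KGraph k) : ℕ → Set G.Real
  | 0 => ⋃ v ∈ { v : G.Mor | G.deg v = 0 }, G.Qcube v
  | (r+1) => skel' G r ∪
      ⋃ lam ∈ { lam : G.Mor | G.deg lam ≤ 1 ∧ ∑ i, G.deg lam i = r + 1 },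
        G.Qcube lam

/-- The `r`-skeleton (wrapper). -/
def skel (r : ℕ) : Set Λ.Real := skel' Λ r

/-- A `k`-graph is connected if any two vertices are joined by an undirected
path of morphisms. -/
def Connected : Prop :=
  ∀ u v : Λ.Mor, Λ.deg u = 0 → Λ.deg v = 0 →
    Relation.ReflTransGen (fun x y => ∃ e : Λ.Mor,
      (Λ.src e = x ∧ Λ.rng e = y) ∨ (Λ.src e = y ∧ Λ.rng e = x)) u v

end KGraph

/-- A morphism of `k`-graphs: a degree-preserving functor. -/
@[ext]
structure KGraphHom {k : ℕ} (Λ Γ : KGraph k) where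
  toFun : Λ.Mor → Γ.Mor
  map_src : ∀ a, toFun (Λ.src a) = Γ.src (toFun a)
  map_rng : ∀ a, toFun (Λ.rng a) = Γ.rng (toFun a)
  map_comp : ∀ a b, Λ.src a = Λ.rng b →
    toFun (Λ.comp a b) = Γ.comp (toFun a) (toFun b)
  map_deg : ∀ a, Γ.deg (toFun a) = Λ.deg a

namespace KGraphHom

variable {k : ℕ} {Λ Γ Θ : KGraph k}

/-- The identity `k`-graph morphism. -/
def id (Λ : KGraph k) : KGraphHom Λ Λ :=
  ⟨fun a => a, fun _ => rfl, fun _ => rfl, fun _ _ _ => rfl, fun _ => rfl⟩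

/-- Composition of `k`-graph morphisms. -/
def comp (ψ : KGraphHom Γ Θ) (φ : KGraphHom Λ Γ) : KGraphHom Λ Θ where
  toFun := ψ.toFun ∘ φ.toFun
  map_src a := by simp [Function.comp, φ.map_src, ψ.map_src]
  map_rng a := by simp [Function.comp, φ.map_rng, ψ.map_rng]
  map_comp a b h := by
    simp only [Function.comp]
    rw [φ.map_comp a b h, ψ.map_comp _ _ (by rw [← φ.map_src, ← φ.map_rng, h])]
  map_deg a := by simp [Function.comp, φ.map_deg, ψ.map_deg]

/-- The induced map on points `(λ, t) ↦ (φ(λ), t)`. -/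
def pointMap (φ : KGraphHom Λ Γ) : Λ.Points → Γ.Points :=
  fun p => ⟨φ.toFun p.1, ⟨p.2.1, fun i => by rw [φ.map_deg]; exact p.2.2 i⟩⟩

/-- The induced map `φ̃ : X_Λ → X_Γ` on topological realizations,
`φ̃([λ,t]) = [φ(λ), t]` (defined via choice of representatives). -/
noncomputable def real (φ : KGraphHom Λ Γ) : Λ.Real → Γ.Real :=
  fun x => Quotient.mk Γ.ptSetoid (φ.pointMap (Quotient.out x))

end KGraphHom

/-- A covering of `k`-graphs: a surjective degree-preserving functor
`p : Ω → Λ` mapping `Ωv` bijectively onto `Λp(v)` and `vΩ` bijectively onto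
`p(v)Λ` for every vertex `v` of `Ω`. -/
def KGraphHom.IsCovering {k : ℕ} {Ω Λ : KGraph k} (p : KGraphHom Ω Λ) : Prop :=
  Function.Surjective p.toFun ∧
    ∀ v : Ω.Mor, Ω.deg v = 0 →
      Set.BijOn p.toFun { a | Ω.src a = v } { b | Λ.src b = p.toFun v } ∧
      Set.BijOn p.toFun { a | Ω.rng a = v } { b | Λ.rng b = p.toFun v }

section CrossedProduct

variable {k l : ℕ}

/-- The mapping torus `M(σ) = (X × ℝˡ)/(σ × lt)` of an action `σ` of `ℤˡ` on a
topological space `X` by homeomorphisms (here given by an action of `ℤˡ` on a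
`k`-graph, realized on `X = X_Λ`): the orbit space of the action
`(σ × lt)_m(x,t) = (σ_m(x), m + t)`. -/
def MappingTorusKGraph (Λ : KGraph k) (α : (Fin l → ℤ) → KGraphHom Λ Λ) : Type :=
  Quot (fun x y : Λ.Real × (Fin l → ℝ) => ∃ m : Fin l → ℤ,
    y.1 = (α m).real x.1 ∧ y.2 = (fun j => (m j : ℝ)) + x.2)

noncomputable instance (Λ : KGraph k) (α : (Fin l → ℤ) → KGraphHom Λ Λ) :
    TopologicalSpace (MappingTorusKGraph Λ α) :=
  inferInstanceAs (TopologicalSpace (Quot _))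

/-- An identification of a `(k+l)`-graph `C` with the crossed product
`Λ ×_α ℤˡ` of a `k`-graph `Λ` by an action `α` of `ℤˡ`: as a set
`Λ ×_α ℤˡ = Λ × ℕˡ`, with `d(λ,m) = (d(λ), m)`, `r(λ,m) = (r(λ),0)`,
`s(λ,m) = (α_{-m}(s(λ)), 0)` and `(λ,m)(μ,n) = (λ·α_m(μ), m+n)`. -/
structure IsCrossedProduct (Λ : KGraph k) (α : (Fin l → ℤ) → KGraphHom Λ Λ)
    (C : KGraph (k + l)) where
  e : C.Mor ≃ Λ.Mor × (Fin l → ℕ)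
  deg_eq : ∀ c, C.deg c = Fin.append (Λ.deg (e c).1) (e c).2
  rng_eq : ∀ c, e (C.rng c) = (Λ.rng (e c).1, 0)
  src_eq : ∀ c, e (C.src c) =
    ((α (fun j => -((e c).2 j : ℤ))).toFun (Λ.src (e c).1), 0)
  comp_eq : ∀ c d, C.src c = C.rng d →
    e (C.comp c d) =
      (Λ.comp (e c).1 ((α (fun j => ((e c).2 j : ℤ))).toFun (e d).1),
        (e c).2 + (e d).2)

theorem Fin.comp_append {α β : Type*} (g : α → β) (u : Fin k → α) (v : Fin l → α) :
    g ∘ Fin.append u v = Fin.append (g ∘ u) (g ∘ v) := by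
  ext i
  refine Fin.addCases (fun i => ?_) (fun j => ?_) i <;> simp

theorem Fin.append_sub_append {M : Type*} [Sub M] (a b : Fin k → M) (c d : Fin l → M) :
    Fin.append a c - Fin.append b d = Fin.append (a - b) (c - d) := by
  ext i
  refine Fin.addCases (fun i => ?_) (fun j => ?_) i <;> simp

namespace KGraph

theorem fl_le_ce (t : Fin k → ℝ) : fl t ≤ ce t :=
  fun _ => Int.toNat_le_toNat (Int.floor_le_ceil _)

theorem ce_le {t : Fin k → ℝ} {d : Fin k → ℕ} (h : ∀ i, t i ≤ d i) : ce t ≤ d :=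
  fun i => Int.toNat_le.mpr (Int.ceil_le.mpr (by exact_mod_cast h i))

theorem fl_append (s : Fin k → ℝ) (t : Fin l → ℝ) :
    fl (Fin.append s t) = Fin.append (fl s) (fl t) :=
  Fin.comp_append (fun x : ℝ => ⌊x⌋.toNat) s t

theorem ce_append (s : Fin k → ℝ) (t : Fin l → ℝ) :
    ce (Fin.append s t) = Fin.append (ce s) (ce t) :=
  Fin.comp_append (fun x : ℝ => ⌈x⌉.toNat) s t

theorem frac_append (s : Fin k → ℝ) (t : Fin l → ℝ) :
    frac (Fin.append s t) = Fin.append (frac s) (frac t) :=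
  Fin.comp_append (fun x : ℝ => x - (⌊x⌋.toNat : ℝ)) s t

theorem natCast_fl_of_nonneg {t : Fin k → ℝ} (ht : ∀ i, 0 ≤ t i) (i : Fin k) :
    (fl t i : ℤ) = ⌊t i⌋ :=
  Int.toNat_of_nonneg (Int.floor_nonneg.mpr (ht i))

theorem frac_of_nonneg {t : Fin k → ℝ} (ht : ∀ i, 0 ≤ t i) :
    frac t = fun i => Int.fract (t i) := by
  ext i
  rw [frac, ← Int.self_sub_floor, ← Int.cast_natCast, ← fl, natCast_fl_of_nonneg ht]

theorem ce_sub_fl_of_nonneg {t : Fin k → ℝ} (ht : ∀ i, 0 ≤ t i) :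
    ce t - fl t = fun i => ⌈Int.fract (t i)⌉.toNat := by
  ext i
  have hfl : 0 ≤ ⌊t i⌋ := Int.floor_nonneg.mpr (ht i)
  have hce : ⌈t i⌉ = ⌈Int.fract (t i)⌉ + ⌊t i⌋ := by
    rw [← Int.ceil_add_intCast, Int.fract_add_floor]
  have hce₀ : 0 ≤ ⌈Int.fract (t i)⌉ := Int.ceil_nonneg (Int.fract_nonneg _)
  simp only [Pi.sub_apply, ce, fl, hce]
  omega

variable (Λ : KGraph k)

theorem eq_of_comp_eq_comp {x z x' z' : Λ.Mor} (hx : Λ.deg x = Λ.deg x')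
    (hz : Λ.deg z = Λ.deg z') (h : Λ.src x = Λ.rng z) (h' : Λ.src x' = Λ.rng z')
    (he : Λ.comp x z = Λ.comp x' z') : x = x' ∧ z = z' := by
  obtain ⟨_, _, huniq⟩ := Λ.factor (Λ.comp x z) (Λ.deg x) (Λ.deg z) (Λ.deg_comp x z h)
  exact Prod.ext_iff.mp
    ((huniq (x, z) ⟨rfl, rfl, h, rfl⟩).trans (huniq (x', z') ⟨hx.symm, hz.symm, h', he.symm⟩).symm)

theorem seg_eq_of_eq_comp {a x b y : Λ.Mor} {m n : Fin k → ℕ} (hx : Λ.deg x = m)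
    (hb : Λ.deg b = n - m) (hxb : Λ.src x = Λ.rng b) (hby : Λ.src b = Λ.rng y)
    (ha : a = Λ.comp x (Λ.comp b y)) : Λ.seg a m n = b := by
  have hex : ∃ b' : Λ.Mor, Λ.deg b' = n - m ∧ ∃ x' y' : Λ.Mor,
      Λ.deg x' = m ∧ Λ.src x' = Λ.rng b' ∧ Λ.src b' = Λ.rng y' ∧
      a = Λ.comp x' (Λ.comp b' y') := ⟨b, hb, x, y, hx, hxb, hby, ha⟩
  rw [seg, dif_pos hex]
  obtain ⟨hb', x', y', hx', hxb', hby', ha'⟩ := hex.choose_spec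
  generalize hex.choose = b' at hb' hxb' hby' ha' ⊢
  have hxby : Λ.src x = Λ.rng (Λ.comp b y) := by rw [Λ.rng_comp b y hby, hxb]
  have hxby' : Λ.src x' = Λ.rng (Λ.comp b' y') := by rw [Λ.rng_comp _ _ hby', hxb']
  have hdeg : Λ.deg (Λ.comp b y) = Λ.deg (Λ.comp b' y') := by
    have h := congrArg Λ.deg (ha.symm.trans ha')
    rw [Λ.deg_comp _ _ hxby, Λ.deg_comp _ _ hxby', hx, hx'] at h
    exact add_left_cancel h
  have hcomp := (Λ.eq_of_comp_eq_comp (hx.trans hx'.symm) hdeg hxby hxby' (ha.symm.trans ha')).2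
  have hy : Λ.deg y = Λ.deg y' := by
    rw [Λ.deg_comp _ _ hby, Λ.deg_comp _ _ hby', hb, hb'] at hdeg
    exact add_left_cancel hdeg
  exact (Λ.eq_of_comp_eq_comp (hb.trans hb'.symm) hy hby hby' hcomp).1.symm

theorem exists_eq_comp_comp {a : Λ.Mor} {m n : Fin k → ℕ} (hmn : m ≤ n) (hn : n ≤ Λ.deg a) :
    ∃ x b y, Λ.deg x = m ∧ Λ.deg b = n - m ∧ Λ.src x = Λ.rng b ∧ Λ.src b = Λ.rng y ∧
      a = Λ.comp x (Λ.comp b y) := by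
  obtain ⟨⟨x, z⟩, ⟨hx, hz, hxz, rfl⟩, -⟩ :=
    Λ.factor a m (Λ.deg a - m) (by rw [add_tsub_cancel_of_le (hmn.trans hn)])
  obtain ⟨⟨b, y⟩, ⟨hb, -, hby, rfl⟩, -⟩ := Λ.factor z (n - m) (Λ.deg z - (n - m))
    (by rw [add_tsub_cancel_of_le (hz ▸ tsub_le_tsub_right hn m)])
  exact ⟨x, b, y, hx, hb, by rwa [Λ.rng_comp b y hby] at hxz, hby, rfl⟩

theorem pt_congr {G : KGraph k} {a b : G.Mor} {t u : Fin k → ℝ} (hab : a = b) (htu : t = u)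
    {h : ∀ i, 0 ≤ t i ∧ t i ≤ (G.deg a i : ℝ)} {h' : ∀ i, 0 ≤ u i ∧ u i ≤ (G.deg b i : ℝ)} :
    G.pt a t h = G.pt b u h' := by
  subst hab htu
  rfl

abbrev Cell (G : KGraph k) (a : G.Mor) : Type :=
  { t : Fin k → ℝ // ∀ i, 0 ≤ t i ∧ t i ≤ (G.deg a i : ℝ) }

theorem continuous_pt (G : KGraph k) (a : G.Mor) : Continuous fun x : G.Cell a => G.pt a x.1 x.2 :=
  continuous_quot_mk.comp (continuous_sigmaMk (σ := G.Cell))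

end KGraph

namespace KGraphHom

variable {Λ Γ : KGraph k} (φ : KGraphHom Λ Γ)

theorem map_seg {a : Λ.Mor} {m n : Fin k → ℕ} (hmn : m ≤ n) (hn : n ≤ Λ.deg a) :
    Γ.seg (φ.toFun a) m n = φ.toFun (Λ.seg a m n) := by
  obtain ⟨x, b, y, hx, hb, hxb, hby, ha⟩ := Λ.exists_eq_comp_comp hmn hn
  rw [Λ.seg_eq_of_eq_comp hx hb hxb hby ha]
  refine Γ.seg_eq_of_eq_comp (x := φ.toFun x) (y := φ.toFun y) (by rw [φ.map_deg, hx])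
    (by rw [φ.map_deg, hb]) (by rw [← φ.map_src, ← φ.map_rng, hxb])
    (by rw [← φ.map_src, ← φ.map_rng, hby]) ?_
  rw [ha, φ.map_comp _ _ (by rw [Λ.rng_comp _ _ hby, hxb]), φ.map_comp _ _ hby]

theorem map_bounds {a : Λ.Mor} {s : Fin k → ℝ} (hs : ∀ i, 0 ≤ s i ∧ s i ≤ (Λ.deg a i : ℝ)) :
    ∀ i, 0 ≤ s i ∧ s i ≤ (Γ.deg (φ.toFun a) i : ℝ) := by
  simpa only [φ.map_deg] using hs

theorem ptRel_pointMap {p q : Λ.Points} (h : Λ.ptRel p q) :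
    Γ.ptRel (φ.pointMap p) (φ.pointMap q) := by
  refine ⟨?_, h.2⟩
  simp only [pointMap]
  rw [φ.map_seg (KGraph.fl_le_ce _) (KGraph.ce_le fun i => (p.2.2 i).2),
    φ.map_seg (KGraph.fl_le_ce _) (KGraph.ce_le fun i => (q.2.2 i).2), h.1]

theorem real_mk (p : Λ.Points) :
    φ.real (Quotient.mk Λ.ptSetoid p) = Quotient.mk Γ.ptSetoid (φ.pointMap p) :=
  Quotient.sound (φ.ptRel_pointMap (Quotient.exact (Quotient.out_eq (Quotient.mk Λ.ptSetoid p))))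

end KGraphHom

structure IsKGraphAction {Λ : KGraph k} (α : (Fin l → ℤ) → KGraphHom Λ Λ) : Prop where
  map_zero : α 0 = KGraphHom.id Λ
  map_add : ∀ m n, α (m + n) = (α m).comp (α n)

namespace IsKGraphAction

variable {Λ : KGraph k} {α : (Fin l → ℤ) → KGraphHom Λ Λ} (hα : IsKGraphAction α)
include hα

theorem apply_apply {m n p : Fin l → ℤ} (h : m + n = p) (a : Λ.Mor) :
    (α m).toFun ((α n).toFun a) = (α p).toFun a := by
  rw [← h, hα.map_add]
  rfl

theorem apply_of_eq_zero {m : Fin l → ℤ} (h : m = 0) (a : Λ.Mor) : (α m).toFun a = a := by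
  rw [h, hα.map_zero]
  rfl

end IsKGraphAction

namespace MappingTorusKGraph

variable {Λ : KGraph k} {α : (Fin l → ℤ) → KGraphHom Λ Λ}

theorem mk_pt_shift (m : Fin l → ℤ) {a : Λ.Mor} {s : Fin k → ℝ}
    (hs : ∀ i, 0 ≤ s i ∧ s i ≤ (Λ.deg a i : ℝ)) (t : Fin l → ℝ) :
    (Quot.mk _ (Λ.pt a s hs, t) : MappingTorusKGraph Λ α) =
      Quot.mk _ (Λ.pt ((α m).toFun a) s ((α m).map_bounds hs),
        (fun j => (m j : ℝ)) + t) :=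
  Quot.sound ⟨m, ((α m).real_mk ⟨a, s, hs⟩).symm, rfl⟩

theorem mk_pt_eq_fract {a : Λ.Mor} {s : Fin k → ℝ} (hs : ∀ i, 0 ≤ s i ∧ s i ≤ (Λ.deg a i : ℝ))
    (t : Fin l → ℝ) :
    (Quot.mk _ (Λ.pt a s hs, t) : MappingTorusKGraph Λ α) =
      Quot.mk _ (Λ.pt ((α fun j => -⌊t j⌋).toFun a) s
        ((α fun j => -⌊t j⌋).map_bounds hs), fun j => Int.fract (t j)) := by
  rw [mk_pt_shift _ hs]
  congr 2
  ext j
  simp only [Pi.add_apply, Int.cast_neg, Int.fract]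
  ring

end MappingTorusKGraph

namespace IsCrossedProduct

variable {Λ : KGraph k} {α : (Fin l → ℤ) → KGraphHom Λ Λ} {C : KGraph (k + l)}
  (hC : IsCrossedProduct Λ α C)

theorem deg_e_symm (a : Λ.Mor) (n : Fin l → ℕ) :
    C.deg (hC.e.symm (a, n)) = Fin.append (Λ.deg a) n := by
  rw [hC.deg_eq, hC.e.apply_symm_apply]

theorem rng_e_symm (a : Λ.Mor) (n : Fin l → ℕ) :
    C.rng (hC.e.symm (a, n)) = hC.e.symm (Λ.rng a, 0) :=
  hC.e.eq_symm_apply.mpr (by rw [hC.rng_eq, hC.e.apply_symm_apply])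

theorem src_e_symm (a : Λ.Mor) (n : Fin l → ℕ) :
    C.src (hC.e.symm (a, n)) = hC.e.symm ((α fun j => -(n j : ℤ)).toFun (Λ.src a), 0) :=
  hC.e.eq_symm_apply.mpr (by rw [hC.src_eq, hC.e.apply_symm_apply])

theorem comp_e_symm {a b : Λ.Mor} {m n : Fin l → ℕ}
    (h : C.src (hC.e.symm (a, m)) = C.rng (hC.e.symm (b, n))) :
    C.comp (hC.e.symm (a, m)) (hC.e.symm (b, n)) =
      hC.e.symm (Λ.comp a ((α fun j => (m j : ℤ)).toFun b), m + n) :=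
  hC.e.eq_symm_apply.mpr (by rw [hC.comp_eq _ _ h, hC.e.apply_symm_apply, hC.e.apply_symm_apply])

theorem append_bounds {b : Λ.Mor} {n : Fin l → ℕ} {s : Fin k → ℝ} {t : Fin l → ℝ}
    (hs : ∀ i, 0 ≤ s i ∧ s i ≤ (Λ.deg b i : ℝ)) (ht : ∀ j, 0 ≤ t j ∧ t j ≤ (n j : ℝ)) :
    ∀ i, 0 ≤ Fin.append s t i ∧ Fin.append s t i ≤ (C.deg (hC.e.symm (b, n)) i : ℝ) := by
  rw [hC.deg_e_symm]
  intro i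
  refine Fin.addCases (fun i => ?_) (fun j => ?_) i <;> simp [hs, ht]

theorem castAdd_bounds {c : C.Mor} {u : Fin (k + l) → ℝ}
    (hu : ∀ i, 0 ≤ u i ∧ u i ≤ (C.deg c i : ℝ)) :
    ∀ i, 0 ≤ u (Fin.castAdd l i) ∧ u (Fin.castAdd l i) ≤ (Λ.deg (hC.e c).1 i : ℝ) := by
  simpa [hC.deg_eq] using fun i => hu (Fin.castAdd l i)

theorem natAdd_bounds {c : C.Mor} {u : Fin (k + l) → ℝ}
    (hu : ∀ i, 0 ≤ u i ∧ u i ≤ (C.deg c i : ℝ)) :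
    ∀ j, 0 ≤ u (Fin.natAdd k j) ∧ u (Fin.natAdd k j) ≤ ((hC.e c).2 j : ℝ) := by
  simpa [hC.deg_eq] using fun j => hu (Fin.natAdd k j)

theorem seg_e_symm (hα : IsKGraphAction α) {a : Λ.Mor} {n : Fin l → ℕ} {m₁ m₂ : Fin k → ℕ}
    {p₁ p₂ : Fin l → ℕ} (hm : m₁ ≤ m₂) (hm₂ : m₂ ≤ Λ.deg a) (hp : p₁ ≤ p₂) (hp₂ : p₂ ≤ n) :
    C.seg (hC.e.symm (a, n)) (Fin.append m₁ p₁) (Fin.append m₂ p₂) =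
      hC.e.symm ((α fun j => -(p₁ j : ℤ)).toFun (Λ.seg a m₁ m₂), p₂ - p₁) := by
  obtain ⟨x, b, y, hx, hb, hxb, hby, rfl⟩ := Λ.exists_eq_comp_comp hm hm₂
  rw [Λ.seg_eq_of_eq_comp hx hb hxb hby rfl]
  have hp' : ∀ j, p₁ j ≤ p₂ j := hp
  have hp₂' : ∀ j, p₂ j ≤ n j := hp₂
  have e₁ : ((fun j => -((p₂ - p₁) j : ℤ)) + fun j => -(p₁ j : ℤ)) = fun j => -(p₂ j : ℤ) := by
    ext j
    simp only [Pi.add_apply, Pi.sub_apply]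
    have := hp' j
    omega
  have e₂ : ((fun j => ((p₂ - p₁) j : ℤ)) + fun j => -(p₂ j : ℤ)) = fun j => -(p₁ j : ℤ) := by
    ext j
    simp only [Pi.add_apply, Pi.sub_apply]
    have := hp' j
    omega
  have hXB : C.src (hC.e.symm (x, p₁)) =
      C.rng (hC.e.symm ((α fun j => -(p₁ j : ℤ)).toFun b, p₂ - p₁)) := by
    rw [hC.src_e_symm, hC.rng_e_symm, ← (α _).map_rng, hxb]
  have hBY : C.src (hC.e.symm ((α fun j => -(p₁ j : ℤ)).toFun b, p₂ - p₁)) =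
      C.rng (hC.e.symm ((α fun j => -(p₂ j : ℤ)).toFun y, n - p₂)) := by
    rw [hC.src_e_symm, hC.rng_e_symm, ← (α _).map_src, ← (α _).map_rng, hby, hα.apply_apply e₁]
  have hBY_comp : C.comp (hC.e.symm ((α fun j => -(p₁ j : ℤ)).toFun b, p₂ - p₁))
      (hC.e.symm ((α fun j => -(p₂ j : ℤ)).toFun y, n - p₂)) =
      hC.e.symm ((α fun j => -(p₁ j : ℤ)).toFun (Λ.comp b y), n - p₁) := by
    rw [hC.comp_e_symm hBY, hα.apply_apply e₂, ← (α _).map_comp _ _ hby]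
    congr 2
    ext j
    simp only [Pi.add_apply, Pi.sub_apply]
    have := hp' j; have := hp₂' j; omega
  refine C.seg_eq_of_eq_comp (x := hC.e.symm (x, p₁)) (by rw [hC.deg_e_symm, hx])
    (by rw [hC.deg_e_symm, (α _).map_deg, hb, Fin.append_sub_append]) hXB hBY ?_
  rw [hBY_comp, hC.comp_e_symm (by rw [hC.src_e_symm, hC.rng_e_symm, ← (α _).map_rng,
      Λ.rng_comp _ _ hby, hxb]), hα.apply_apply (p := 0) (by ext j; simp),
    hα.apply_of_eq_zero rfl]
  congr 2
  ext j
  simp only [Pi.add_apply, Pi.sub_apply]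
  have := hp' j; have := hp₂' j; omega

theorem seg_fl_ce (hα : IsKGraphAction α) (c : C.Mor) (u : Fin (k + l) → ℝ)
    (hu : ∀ i, 0 ≤ u i ∧ u i ≤ (C.deg c i : ℝ)) :
    C.seg c (KGraph.fl u) (KGraph.ce u) =
      hC.e.symm ((α fun j => -⌊u (Fin.natAdd k j)⌋).toFun
          (Λ.seg (hC.e c).1 (KGraph.fl fun i => u (Fin.castAdd l i))
            (KGraph.ce fun i => u (Fin.castAdd l i))),
        fun j => ⌈Int.fract (u (Fin.natAdd k j))⌉.toNat) := by
  have hs := hC.castAdd_bounds hu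
  have ht := hC.natAdd_bounds hu
  have ht₀ : ∀ j, 0 ≤ u (Fin.natAdd k j) := fun j => (ht j).1
  conv_lhs => rw [← hC.e.symm_apply_apply c, ← Fin.append_castAdd_natAdd (f := u),
    KGraph.fl_append, KGraph.ce_append]
  rw [hC.seg_e_symm hα (KGraph.fl_le_ce _) (KGraph.ce_le fun i => (hs i).2) (KGraph.fl_le_ce _)
    (KGraph.ce_le fun j => (ht j).2), KGraph.ce_sub_fl_of_nonneg ht₀]
  simp only [KGraph.natCast_fl_of_nonneg ht₀]

noncomputable def torusPt (p : Λ.Points) (t : Fin l → ℝ) (z : Fin l → ℤ) (n : Fin l → ℕ)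
    (ht : ∀ j, 0 ≤ t j - z j ∧ t j - z j ≤ (n j : ℝ)) : C.Real :=
  C.pt (hC.e.symm ((α (-z)).toFun p.1, n)) (Fin.append p.2.1 fun j => t j - z j)
    (hC.append_bounds ((α (-z)).map_bounds p.2.2) ht)

theorem seg_torusPt (hα : IsKGraphAction α) (p : Λ.Points) (t : Fin l → ℝ) (z : Fin l → ℤ)
    (n : Fin l → ℕ) (ht : ∀ j, 0 ≤ t j - z j ∧ t j - z j ≤ (n j : ℝ)) :
    C.seg (hC.e.symm ((α (-z)).toFun p.1, n)) (KGraph.fl (Fin.append p.2.1 fun j => t j - z j))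
        (KGraph.ce (Fin.append p.2.1 fun j => t j - z j)) =
      hC.e.symm ((α fun j => -⌊t j⌋).toFun (Λ.seg p.1 (KGraph.fl p.2.1) (KGraph.ce p.2.1)),
        fun j => ⌈Int.fract (t j)⌉.toNat) := by
  rw [hC.seg_fl_ce hα _ _ (hC.append_bounds ((α (-z)).map_bounds p.2.2) ht)]
  simp only [hC.e.apply_symm_apply, Fin.append_left, Fin.append_right, Int.floor_sub_intCast,
    Int.fract_sub_intCast]
  rw [(α (-z)).map_seg (KGraph.fl_le_ce _) (KGraph.ce_le fun i => (p.2.2 i).2),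
    hα.apply_apply (p := fun j => -⌊t j⌋) (by ext j; simp; ring)]

theorem torusPt_eq_of_ptRel (hα : IsKGraphAction α) {p q : Λ.Points} (h : Λ.ptRel p q)
    (t : Fin l → ℝ) {z z' : Fin l → ℤ} {n n' : Fin l → ℕ}
    (ht : ∀ j, 0 ≤ t j - z j ∧ t j - z j ≤ (n j : ℝ))
    (ht' : ∀ j, 0 ≤ t j - z' j ∧ t j - z' j ≤ (n' j : ℝ)) :
    hC.torusPt p t z n ht = hC.torusPt q t z' n' ht' := by
  have frac_eq : ∀ (r : Λ.Points) (z : Fin l → ℤ), (∀ j, 0 ≤ t j - z j) →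
      KGraph.frac (Fin.append r.2.1 fun j => t j - z j) =
        Fin.append (KGraph.frac r.2.1) fun j => Int.fract (t j) := by
    intro r z hz
    simp only [KGraph.frac_append, KGraph.frac_of_nonneg hz, Int.fract_sub_intCast]
  exact Quotient.sound
    ⟨by rw [hC.seg_torusPt hα p t z n ht, hC.seg_torusPt hα q t z' n' ht', h.1],
      by rw [frac_eq p z fun j => (ht j).1, frac_eq q z' fun j => (ht' j).1, h.2]⟩

noncomputable def torusPtFloor (p : Λ.Points) (t : Fin l → ℝ) : C.Real :=
  hC.torusPt p t (fun j => ⌊t j⌋) 1 fun j =>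
    ⟨sub_nonneg.mpr (Int.floor_le _), by simpa using (Int.fract_lt_one (t j)).le⟩

theorem torusPtFloor_eq (hα : IsKGraphAction α) (p : Λ.Points) (t : Fin l → ℝ) (z : Fin l → ℤ)
    (n : Fin l → ℕ) (ht : ∀ j, 0 ≤ t j - z j ∧ t j - z j ≤ (n j : ℝ)) :
    hC.torusPtFloor p t = hC.torusPt p t z n ht :=
  hC.torusPt_eq_of_ptRel hα (Λ.ptSetoid.refl p) t _ ht

theorem torusPtFloor_shift (hα : IsKGraphAction α) (m : Fin l → ℤ) (p : Λ.Points)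
    (t : Fin l → ℝ) :
    hC.torusPtFloor ((α m).pointMap p) ((fun j => (m j : ℝ)) + t) = hC.torusPtFloor p t := by
  unfold torusPtFloor torusPt
  refine KGraph.pt_congr ?_ ?_
  · rw [KGraphHom.pointMap,
      hα.apply_apply (p := -fun j => ⌊t j⌋) (by ext j; simp [Int.floor_intCast_add])]
  · ext i
    refine Fin.addCases (fun i => ?_) (fun j => ?_) i
    · simp [KGraphHom.pointMap]
    · simp [Int.floor_intCast_add]

noncomputable def toRealization (hα : IsKGraphAction α) : MappingTorusKGraph Λ α → C.Real :=
  Quot.lift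
    (fun x => Quotient.lift (hC.torusPtFloor · x.2)
      (fun _ _ h => hC.torusPt_eq_of_ptRel hα h _ _ _) x.1)
    (by
      rintro ⟨x, t⟩ ⟨_, _⟩ ⟨m, rfl, rfl⟩
      induction x using Quotient.ind with
      | _ p =>
        rw [KGraphHom.real_mk]
        exact (hC.torusPtFloor_shift hα m p t).symm)

theorem toRealization_mk_pt (hα : IsKGraphAction α) {a : Λ.Mor} {s : Fin k → ℝ}
    (hs : ∀ i, 0 ≤ s i ∧ s i ≤ (Λ.deg a i : ℝ)) {t : Fin l → ℝ} {n : Fin l → ℕ}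
    (ht : ∀ j, 0 ≤ t j ∧ t j ≤ (n j : ℝ))
    (hb : ∀ i, 0 ≤ Fin.append s t i ∧ Fin.append s t i ≤ (C.deg (hC.e.symm (a, n)) i : ℝ)) :
    hC.toRealization hα (Quot.mk _ (Λ.pt a s hs, t)) =
      C.pt (hC.e.symm (a, n)) (Fin.append s t) hb := by
  refine (hC.torusPtFloor_eq hα ⟨a, s, hs⟩ t 0 n (by simpa using ht)).trans ?_
  exact KGraph.pt_congr (by rw [hα.apply_of_eq_zero neg_zero]) (by simp)

def pointToTorus (P : C.Points) : MappingTorusKGraph Λ α :=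
  Quot.mk _ (Λ.pt (hC.e P.1).1 (fun i => P.2.1 (Fin.castAdd l i)) (hC.castAdd_bounds P.2.2),
    fun j => P.2.1 (Fin.natAdd k j))

theorem pointToTorus_eq_of_ptRel (hα : IsKGraphAction α) {P Q : C.Points} (h : C.ptRel P Q) :
    hC.pointToTorus P = hC.pointToTorus Q := by
  obtain ⟨c, u, hu⟩ := P
  obtain ⟨c', u', hu'⟩ := Q
  obtain ⟨hseg, hfrac⟩ := h
  rw [hC.seg_fl_ce hα c u hu, hC.seg_fl_ce hα c' u' hu'] at hseg
  rw [KGraph.frac_of_nonneg fun i => (hu i).1, KGraph.frac_of_nonneg fun i => (hu' i).1] at hfrac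
  have hcell := congrArg Prod.fst (hC.e.symm.injective hseg)
  unfold pointToTorus
  rw [MappingTorusKGraph.mk_pt_eq_fract (hC.castAdd_bounds hu),
    MappingTorusKGraph.mk_pt_eq_fract (hC.castAdd_bounds hu')]
  refine congrArg (Quot.mk _)
    (Prod.ext (Quotient.sound ⟨?_, ?_⟩) (funext fun j => congrFun hfrac _))
  · rw [(α _).map_seg (KGraph.fl_le_ce _) (KGraph.ce_le fun i => (hC.castAdd_bounds hu i).2),
      (α _).map_seg (KGraph.fl_le_ce _) (KGraph.ce_le fun i => (hC.castAdd_bounds hu' i).2)]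
    exact hcell
  · rw [KGraph.frac_of_nonneg fun i => (hu _).1, KGraph.frac_of_nonneg fun i => (hu' _).1]
    exact funext fun i => congrFun hfrac _

noncomputable def ofRealization (hα : IsKGraphAction α) : C.Real → MappingTorusKGraph Λ α :=
  Quotient.lift hC.pointToTorus fun _ _ => hC.pointToTorus_eq_of_ptRel hα

theorem ofRealization_toRealization (hα : IsKGraphAction α) (x : MappingTorusKGraph Λ α) :
    hC.ofRealization hα (hC.toRealization hα x) = x := by
  induction x using Quot.ind with
  | _ x =>
  obtain ⟨x, t⟩ := x
  induction x using Quotient.ind with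
  | _ p =>
  obtain ⟨a, s, hs⟩ := p
  refine Eq.trans ?_ (MappingTorusKGraph.mk_pt_eq_fract hs t).symm
  refine congrArg (Quot.mk _) (Prod.ext (KGraph.pt_congr ?_ ?_) ?_)
  · exact congrArg Prod.fst (hC.e.apply_symm_apply _)
  · ext i
    exact Fin.append_left s (fun j => t j - ⌊t j⌋) i
  · ext j
    exact (Fin.append_right s (fun j => t j - ⌊t j⌋) j).trans (Int.self_sub_floor (t j))

theorem toRealization_ofRealization (hα : IsKGraphAction α) (y : C.Real) :
    hC.toRealization hα (hC.ofRealization hα y) = y := by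
  induction y using Quotient.ind with
  | _ P =>
  obtain ⟨c, u, hu⟩ := P
  refine (hC.toRealization_mk_pt hα (hC.castAdd_bounds hu) (hC.natAdd_bounds hu)
    (hC.append_bounds (hC.castAdd_bounds hu) (hC.natAdd_bounds hu))).trans (KGraph.pt_congr ?_ ?_)
  · rw [Prod.mk.eta, hC.e.symm_apply_apply]
  · exact Fin.append_castAdd_natAdd

theorem continuous_pointToTorus : Continuous hC.pointToTorus := by
  refine continuous_sigma fun c => continuous_quot_mk.comp (Continuous.prodMk ?_ ?_)
  · refine (Λ.continuous_pt (hC.e c).1).comp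
      (Continuous.subtype_mk ?_ fun w => hC.castAdd_bounds w.2)
    exact continuous_pi fun i => (continuous_apply _).comp continuous_subtype_val
  · exact continuous_pi fun j => (continuous_apply _).comp continuous_subtype_val

theorem continuous_ofRealization (hα : IsKGraphAction α) : Continuous (hC.ofRealization hα) :=
  continuous_quot_lift _ hC.continuous_pointToTorus

theorem continuousOn_torusPtFloor (hα : IsKGraphAction α) (a : Λ.Mor) (z : Fin l → ℤ) :
    ContinuousOn (fun w : Λ.Cell a × (Fin l → ℝ) => hC.torusPtFloor ⟨a, w.1⟩ w.2)
      (Prod.snd ⁻¹' Set.univ.pi fun j => Set.Ioo (z j : ℝ) (z j + 2)) := by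
  set U : Set (Λ.Cell a × (Fin l → ℝ)) :=
    Prod.snd ⁻¹' Set.univ.pi fun j => Set.Ioo (z j : ℝ) (z j + 2)
  have hU : ∀ w ∈ U, ∀ j, 0 ≤ w.2 j - z j ∧ w.2 j - z j ≤ ((2 : Fin l → ℕ) j : ℝ) :=
    fun w hw j => by
      obtain ⟨h₁, h₂⟩ := hw j (Set.mem_univ j)
      constructor <;> simp <;> linarith
  have hcoord : Continuous fun w : U => Fin.append w.1.1.1 fun j => w.1.2 j - z j := by fun_prop
  rw [continuousOn_iff_continuous_domRestrict]
  have hrestrict : U.domRestrict (fun w => hC.torusPtFloor ⟨a, w.1⟩ w.2) =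
      fun w => hC.torusPt ⟨a, w.1.1⟩ w.1.2 z 2 (hU w.1 w.2) :=
    funext fun w => hC.torusPtFloor_eq hα _ _ _ _ _
  rw [hrestrict]
  exact (C.continuous_pt (hC.e.symm ((α (-z)).toFun a, 2))).comp (hcoord.subtype_mk fun w =>
    hC.append_bounds ((α (-z)).map_bounds w.1.1.2) (hU w.1 w.2))

theorem continuous_torusPtFloor (hα : IsKGraphAction α) :
    Continuous fun q : Λ.Points × (Fin l → ℝ) => hC.torusPtFloor q.1 q.2 := by
  have hslice : ∀ a, Continuous fun w : Λ.Cell a × (Fin l → ℝ) => hC.torusPtFloor ⟨a, w.1⟩ w.2 := by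
    refine fun a => continuous_iff_continuousAt.mpr fun w => ?_
    refine (hC.continuousOn_torusPtFloor hα a fun j => ⌊w.2 j⌋ - 1).continuousAt
      (((isOpen_set_pi Set.finite_univ fun j _ => isOpen_Ioo).preimage continuous_snd).mem_nhds ?_)
    intro j _
    constructor <;> push_cast <;> linarith [Int.floor_le (w.2 j), Int.lt_floor_add_one (w.2 j)]
  exact (continuous_sigma (f := fun w : Σ a, Λ.Cell a × (Fin l → ℝ) =>
    hC.torusPtFloor ⟨w.1, w.2.1⟩ w.2.2) hslice).comp Homeomorph.sigmaProdDistrib.continuous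

theorem continuous_toRealization (hα : IsKGraphAction α) : Continuous (hC.toRealization hα) :=
  continuous_quot_lift _ (isQuotientMap_quot_mk.continuous_lift_prod_left
    (hC.continuous_torusPtFloor hα))

noncomputable def mappingTorusHomeomorph (hα : IsKGraphAction α) :
    MappingTorusKGraph Λ α ≃ₜ C.Real where
  toFun := hC.toRealization hα
  invFun := hC.ofRealization hα
  left_inv := hC.ofRealization_toRealization hα
  right_inv := hC.toRealization_ofRealization hα
  continuous_toFun := hC.continuous_toRealization hα
  continuous_invFun := hC.continuous_ofRealization hα

end IsCrossedProduct

/-- Let `α` be an action of `ℤˡ` on a `k`-graph `Λ`, with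
induced action `α̃` on `X_Λ` (`α̃_m = (α_m)~`, i.e. `α̃_m([λ,t]) = [α_m(λ),t]`),
and let `C = Λ ×_α ℤˡ` be the crossed-product `(k+l)`-graph.  Then there is a
homeomorphism `φ : M(α̃) ≃ₜ X_{Λ ×_α ℤˡ}` with
`φ([[λ,s],t]) = [(λ,⌈t⌉),(s,t)]` whenever `t ≥ 0`, identifying `ℝ^{k+l}` with
`ℝᵏ × ℝˡ`. -/
theorem crossed_product_realization_is_mapping_torus
    (Λ : KGraph k) (α : (Fin l → ℤ) → KGraphHom Λ Λ)
    (hα0 : α 0 = KGraphHom.id Λ)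
    (hαadd : ∀ m n : Fin l → ℤ, α (m + n) = (α m).comp (α n))
    (C : KGraph (k + l)) (hC : IsCrossedProduct Λ α C) :
    ∃ φ : MappingTorusKGraph Λ α ≃ₜ C.Real,
      ∀ (lam : Λ.Mor) (s : Fin k → ℝ)
        (hs : ∀ i, 0 ≤ s i ∧ s i ≤ (Λ.deg lam i : ℝ))
        (t : Fin l → ℝ) (ht : ∀ j, 0 ≤ t j)
        (hb : ∀ i, 0 ≤ Fin.append s t i ∧
          Fin.append s t i ≤ (C.deg (hC.e.symm (lam, KGraph.ce t)) i : ℝ)),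
        φ (Quot.mk _ (Λ.pt lam s hs, t)) =
          C.pt (hC.e.symm (lam, KGraph.ce t)) (Fin.append s t) hb := by
  have hα : IsKGraphAction α := ⟨hα0, hαadd⟩
  refine ⟨hC.mappingTorusHomeomorph hα, fun lam s hs t ht hb => hC.toRealization_mk_pt hα hs ?_ hb⟩
  exact fun j => ⟨ht j, (Int.le_ceil _).trans (by exact_mod_cast Int.self_le_toNat _)⟩

end CrossedProduct
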